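/- Let n ≥ 1 be a natural number, let c_A, c_R be nonzero real numbers, and let x, y be real numbers. Then the sum over all pairs of natural numbers (j_A, j_R) with j_A + j_R ≤ n of (n!/(j_0!·j_A!·j_R!))·c_A^{max(j_A−1,0)}·c_R^{max(j_R−1,0)}·x^{j_A}·y^{j_R}, where j_0 = n − j_A − j_R, equals (1 + c_A·x + c_R·y)^n/(c_A·c_R) + (1 − 1/c_R)·(1 + c_A·x)^n/c_A + (1 − 1/c_A)·(1 + c_R·y)^n/c_R + (1 − 1/c_A)·(1 − 1/c_R). -/

import Mathlib

open Finset

lemma fact_cast (n jA jR : ℕ) (h : jA + jR ≤ n) :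
    (Nat.factorial n : ℝ) /
      ((n - jA - jR).factorial * jA.factorial * jR.factorial)
    = (n.choose jA) * ((n - jA).choose jR) := by
  have h1 : jA ≤ n := le_trans (Nat.le_add_right _ _) h
  have h2 : jR ≤ n - jA := Nat.le_sub_of_add_le (by omega)
  have e1 := Nat.choose_mul_factorial_mul_factorial h1
  have e2 := Nat.choose_mul_factorial_mul_factorial h2
  have key : n.choose jA * (n - jA).choose jR *
      ((n - jA - jR).factorial * jA.factorial * jR.factorial) = n.factorial := by
    calc n.choose jA * (n - jA).choose jR *
        ((n - jA - jR).factorial * jA.factorial * jR.factorial)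
        = n.choose jA * jA.factorial *
          ((n - jA).choose jR * jR.factorial * (n - jA - jR).factorial) := by ring
      _ = n.choose jA * jA.factorial * (n - jA).factorial := by rw [e2]
      _ = n.factorial := by rw [e1]
  rw [div_eq_iff (by positivity)]
  push_cast [← key]
  ring

lemma trinomial (n : ℕ) (a b : ℝ) :
    ∑ jA ∈ range (n + 1), ∑ jR ∈ range (n + 1 - jA),
      (n.factorial : ℝ) / ((n - jA - jR).factorial * jA.factorial * jR.factorial)
        * a ^ jA * b ^ jR
    = (1 + a + b) ^ n := by
  have h : (1 + a + b) ^ n = (a + (b + 1)) ^ n := by ring_nf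
  rw [h, add_pow]
  apply sum_congr rfl
  intro jA hjA
  have hjA' : jA ≤ n := Nat.lt_succ_iff.mp (mem_range.mp hjA)
  rw [add_pow]
  have hr : n - jA + 1 = n + 1 - jA := by omega
  rw [hr, mul_sum, sum_mul]
  apply sum_congr rfl
  intro jR hjR
  have hjR' : jR ≤ n - jA := Nat.lt_succ_iff.mp (by rw [← hr] at hjR; exact mem_range.mp hjR)
  rw [fact_cast n jA jR (by omega)]
  simp only [one_pow]
  ring

lemma binomial (n : ℕ) (t : ℝ) :
    ∑ jA ∈ range (n + 1),
      (n.factorial : ℝ) / ((n - jA).factorial * jA.factorial) * t ^ jA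
    = (1 + t) ^ n := by
  have h : (1 + t) ^ n = (t + 1) ^ n := by ring_nf
  rw [h, add_pow]
  apply sum_congr rfl
  intro jA hjA
  have hjA' : jA ≤ n := Nat.lt_succ_iff.mp (mem_range.mp hjA)
  have e1 := Nat.choose_mul_factorial_mul_factorial hjA'
  have key : (n.factorial : ℝ) / ((n - jA).factorial * jA.factorial) = n.choose jA := by
    rw [div_eq_iff (by positivity)]
    push_cast [← e1]
    ring
  rw [key]
  simp only [one_pow]
  ring

/-- Closed-form of the statistical weight sum under partial cooperativity with
constants `cA`, `cR`. -/
theorem partial_cooperativity_sum (n : ℕ) (hn : 1 ≤ n) (cA cR : ℝ)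
    (hcA : cA ≠ 0) (hcR : cR ≠ 0) (x y : ℝ) :
    ∑ jA ∈ Finset.range (n + 1), ∑ jR ∈ Finset.range (n + 1 - jA),
      (n.factorial : ℝ) /
          ((n - jA - jR).factorial * jA.factorial * jR.factorial) *
        cA ^ (jA - 1) * cR ^ (jR - 1) * x ^ jA * y ^ jR
      = (1 + cA * x + cR * y) ^ n / (cA * cR)
        + (1 - 1 / cR) * (1 + cA * x) ^ n / cA
        + (1 - 1 / cA) * (1 + cR * y) ^ n / cR
        + (1 - 1 / cA) * (1 - 1 / cR) := by
  classical
  have hsplit : ∀ (c t : ℝ), c ≠ 0 → ∀ j : ℕ,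
      c ^ (j - 1) * t ^ j = (c * t) ^ j * (1 / c) + (if j = 0 then 1 - 1 / c else 0) := by
    intro c t hc j
    cases j with
    | zero => simp
    | succ k =>
      simp only [Nat.succ_sub_one, if_neg (Nat.succ_ne_zero k), add_zero, mul_pow]
      field_simp
      ring
  set C : ℕ → ℕ → ℝ := fun jA jR =>
    (n.factorial : ℝ) / ((n - jA - jR).factorial * jA.factorial * jR.factorial) with hC
  have step1 : ∑ jA ∈ Finset.range (n + 1), ∑ jR ∈ Finset.range (n + 1 - jA),
      C jA jR * cA ^ (jA - 1) * cR ^ (jR - 1) * x ^ jA * y ^ jR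
      = ∑ jA ∈ Finset.range (n + 1), ∑ jR ∈ Finset.range (n + 1 - jA),
        (C jA jR * (cA*x)^jA * (cR*y)^jR * (1/cA * (1/cR))
         + (if jR = 0 then C jA jR * (cA*x)^jA * (1/cA) * (1-1/cR) else 0)
         + ((if jA = 0 then C jA jR * (cR*y)^jR * (1/cR) * (1-1/cA) else 0)
         + (if jA = 0 then (if jR = 0 then C jA jR * (1-1/cA) * (1-1/cR) else 0) else 0))) := by
    apply sum_congr rfl; intro jA _
    apply sum_congr rfl; intro jR _
    have e : C jA jR * cA ^ (jA - 1) * cR ^ (jR - 1) * x ^ jA * y ^ jR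
        = C jA jR * (cA ^ (jA - 1) * x ^ jA) * (cR ^ (jR - 1) * y ^ jR) := by ring
    rw [e, hsplit cA x hcA jA, hsplit cR y hcR jR]
    split_ifs <;> ring
  rw [step1]
  simp only [Finset.sum_add_distrib]
  have S11 : ∑ jA ∈ Finset.range (n + 1), ∑ jR ∈ Finset.range (n + 1 - jA),
      C jA jR * (cA*x)^jA * (cR*y)^jR * (1/cA * (1/cR))
      = (1 + cA * x + cR * y) ^ n * (1/cA * (1/cR)) := by
    rw [← trinomial n (cA*x) (cR*y), sum_mul]
    apply sum_congr rfl; intro jA _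
    rw [sum_mul]
  have S12 : ∑ jA ∈ Finset.range (n + 1), ∑ jR ∈ Finset.range (n + 1 - jA),
      (if jR = 0 then C jA jR * (cA*x)^jA * (1/cA) * (1-1/cR) else 0)
      = (1 + cA * x) ^ n * (1/cA) * (1-1/cR) := by
    rw [← binomial n (cA*x), sum_mul, sum_mul]
    apply sum_congr rfl; intro jA hjA
    have hjA' : jA ≤ n := Nat.lt_succ_iff.mp (mem_range.mp hjA)
    rw [Finset.sum_ite_eq' (Finset.range (n + 1 - jA)) 0
      (fun jR => C jA jR * (cA*x)^jA * (1/cA) * (1-1/cR))]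
    rw [if_pos (mem_range.mpr (by omega))]
    simp only [hC, Nat.sub_zero, Nat.factorial_zero, Nat.cast_one, mul_one]
  have S21 : ∑ jA ∈ Finset.range (n + 1), ∑ jR ∈ Finset.range (n + 1 - jA),
      (if jA = 0 then C jA jR * (cR*y)^jR * (1/cR) * (1-1/cA) else 0)
      = (1 + cR * y) ^ n * (1/cR) * (1-1/cA) := by
    have inner : ∀ jA ∈ Finset.range (n + 1),
        (∑ jR ∈ Finset.range (n + 1 - jA),
          (if jA = 0 then C jA jR * (cR*y)^jR * (1/cR) * (1-1/cA) else 0))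
        = (if jA = 0 then (1 + cR * y) ^ n * (1/cR) * (1-1/cA) else 0) := by
      intro jA _
      by_cases h : jA = 0
      · subst h
        simp only [Nat.sub_zero, eq_self_iff_true, if_true]
        rw [← binomial n (cR*y), sum_mul, sum_mul]
        apply sum_congr rfl; intro jR _
        simp only [hC, Nat.sub_zero, Nat.factorial_zero, Nat.cast_one]
        ring
      · simp [h]
    rw [sum_congr rfl inner, Finset.sum_ite_eq' (Finset.range (n + 1)) 0
      (fun _ => (1 + cR * y) ^ n * (1/cR) * (1-1/cA)),
      if_pos (mem_range.mpr (by omega))]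
  have S22 : ∑ jA ∈ Finset.range (n + 1), ∑ jR ∈ Finset.range (n + 1 - jA),
      (if jA = 0 then (if jR = 0 then C jA jR * (1-1/cA) * (1-1/cR) else 0) else 0)
      = (1-1/cA) * (1-1/cR) := by
    have inner : ∀ jA ∈ Finset.range (n + 1),
        (∑ jR ∈ Finset.range (n + 1 - jA),
          (if jA = 0 then (if jR = 0 then C jA jR * (1-1/cA) * (1-1/cR) else 0) else 0))
        = (if jA = 0 then (1-1/cA) * (1-1/cR) else 0) := by
      intro jA _
      by_cases h : jA = 0
      · subst h
        simp only [Nat.sub_zero, eq_self_iff_true, if_true]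
        rw [Finset.sum_ite_eq' (Finset.range (n + 1)) 0
          (fun jR => C 0 jR * (1-1/cA) * (1-1/cR)),
          if_pos (mem_range.mpr (by omega))]
        simp only [hC, Nat.sub_zero, Nat.factorial_zero, Nat.cast_one, mul_one, one_mul]
        rw [div_self (by positivity)]
        ring
      · simp [h]
    rw [sum_congr rfl inner, Finset.sum_ite_eq' (Finset.range (n + 1)) 0
      (fun _ => (1-1/cA) * (1-1/cR)), if_pos (mem_range.mpr (by omega))]
  rw [S11, S12, S21, S22]
  ring
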